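/- Let (X,d) be a separable metric space such that the action (Iso(X),X) is Cauchy-indivisible. If X_p ≠ ∅, then X*_p = X̂, where X*_p = { y ∈ X̂ : there exist a sequence {g_n} ⊆ Iso(X) with no convergent subsequence in Iso(X) and a point x ∈ X such that {g_n x} and {g_n^{-1} x} are Cauchy sequences, and y = [g_k x_k] for some Cauchy sequence {x_k} in X }. -/

import Mathlib

open Filter Topology Set UniformSpace

noncomputable section

/-- The topology of pointwise convergence on the group of surjective isometries of `X`. -/
instance isoPointwiseTopology (X : Type*) [MetricSpace X] : TopologicalSpace (X ≃ᵢ X) :=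
  TopologicalSpace.induced (fun g => (g : X → X)) Pi.topologicalSpace

/-- A net `g` diverges (`g_i → ∞`), i.e. it has no convergent subnet; equivalently,
no cluster point. -/
def DivergentNet {G : Type*} [TopologicalSpace G] {ι : Type*} [Preorder ι]
    (g : ι → G) : Prop :=
  ∀ h : G, ¬ MapClusterPt h atTop g

/-- A sequence `g` diverges (`g_n → ∞`), i.e. it has no convergent subsequence. -/
def DivergentSeq {G : Type*} [TopologicalSpace G] (g : ℕ → G) : Prop :=
  ∀ φ : ℕ → ℕ, StrictMono φ → ∀ h : G, ¬ Tendsto (g ∘ φ) atTop (𝓝 h)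

/-- The natural evaluation action of `Iso(X)` on `X` is Cauchy-indivisible: whenever a
net `g` in `Iso(X)` has no convergent subnet and `(g_i x)` is a Cauchy net for some
`x`, then `(g_i y)` is a Cauchy net for every `y`. -/
def IsoCauchyIndivisible (X : Type*) [MetricSpace X] : Prop :=
  ∀ (ι : Type*) [Nonempty ι] [Preorder ι] [IsDirected ι (· ≤ ·)],
    ∀ g : ι → X ≃ᵢ X, DivergentNet g →
      (∃ x : X, Cauchy (map (fun i => g i x) atTop)) →
      ∀ y : X, Cauchy (map (fun i => g i y) atTop)

/-- Properness of the isometric evaluation action, expressed through emptiness of all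
limit sets `L(x)`: no net in `Iso(X)` without convergent subnet has `(g_i x)`
converging in `X`. -/
def IsoProperLimits (X : Type*) [MetricSpace X] : Prop :=
  ∀ (ι : Type*) [Nonempty ι] [Preorder ι] [IsDirected ι (· ≤ ·)],
    ∀ g : ι → X ≃ᵢ X, DivergentNet g →
      ∀ x y : X, ¬ Tendsto (fun i => g i x) atTop (𝓝 y)

/-- The canonical lift `ĝ` of an isometry of `X` to the completion `X̂`. -/
def hatIso {X : Type*} [MetricSpace X] (g : X ≃ᵢ X) : Completion X → Completion X :=
  Completion.map (g : X → X)

/-- The lifted group `{ĝ : g ∈ Iso(X)}` inside the selfmaps of `X̂`. -/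
def hatIsoSet (X : Type*) [MetricSpace X] : Set (Completion X → Completion X) :=
  Set.range (hatIso (X := X))

/-- The Ellis semigroup `E`: the closure of the lifted group `{ĝ}` in the topology of
pointwise convergence on selfmaps of `X̂`. -/
def Ellis (X : Type*) [MetricSpace X] : Set (Completion X → Completion X) :=
  closure (hatIsoSet X)

/-- The set `H` of pointwise limits on `X̂` of divergent sequences of lifted isometries. -/
def Hset (X : Type*) [MetricSpace X] : Set (Completion X → Completion X) :=
  { h | Continuous h ∧ ∃ g : ℕ → X ≃ᵢ X, DivergentSeq g ∧
      Tendsto (fun n => hatIso (g n)) atTop (𝓝 h) }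

/-- The set `X_l ⊆ X̂` of limit points of the action `(Iso(X), X)` in the completion. -/
def Xl (X : Type*) [MetricSpace X] : Set (Completion X) :=
  { y | ∃ (g : ℕ → X ≃ᵢ X) (x : X), DivergentSeq g ∧
      CauchySeq (fun n => g n x) ∧
      Tendsto (fun n => ((g n x : X) : Completion X)) atTop (𝓝 y) }

/-- The set `X_p ⊆ X̂` of special limit points of the action `(Iso(X), X)`. -/
def Xp (X : Type*) [MetricSpace X] : Set (Completion X) :=
  { y | ∃ (g : ℕ → X ≃ᵢ X) (x : X), DivergentSeq g ∧
      CauchySeq (fun n => g n x) ∧ CauchySeq (fun n => (g n).symm x) ∧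
      Tendsto (fun n => ((g n x : X) : Completion X)) atTop (𝓝 y) }

/-- `X ∪ X_l`, with `X` identified with its image in the completion `X̂`. -/
def XcupXl (X : Type*) [MetricSpace X] : Set (Completion X) :=
  Set.range ((↑) : X → Completion X) ∪ Xl X

/-- `X ∪ X_p`, with `X` identified with its image in the completion `X̂`. -/
def XcupXp (X : Type*) [MetricSpace X] : Set (Completion X) :=
  Set.range ((↑) : X → Completion X) ∪ Xp X

/-- The Ellis semigroup is a group: every element has a two-sided inverse in `E`
(under composition). -/
def EllisIsGroup (X : Type*) [MetricSpace X] : Prop :=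
  ∀ f ∈ Ellis X, ∃ g ∈ Ellis X, f ∘ g = id ∧ g ∘ f = id


/-- The set `X*_p` of points `[g_k x_k]` for Cauchy sequences `(x_k)` in `X` and
divergent sequences `(g_n)` in `Iso(X)` such that `(g_n x)` and `(g_n⁻¹ x)` are Cauchy
for some `x ∈ X`. -/
def XpStar (X : Type*) [MetricSpace X] : Set (Completion X) :=
  { y | ∃ (g : ℕ → X ≃ᵢ X) (x : X) (xs : ℕ → X), DivergentSeq g ∧
      CauchySeq (fun n => g n x) ∧ CauchySeq (fun n => (g n).symm x) ∧
      CauchySeq xs ∧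
      Tendsto (fun k => ((g k (xs k) : X) : Completion X)) atTop (𝓝 y) }

/-! Let `g_n`, `x` witness `X_p ≠ ∅`. For separable `X` the pointwise topology on `Iso(X)` is
first countable and inversion is continuous, so `(g_n⁻¹)` has no cluster point either, and
Cauchy-indivisibility makes `(g_n⁻¹ y)` Cauchy for every `y`. Given `z = [z_k] ∈ X̂`, the points
`x_k := g_k⁻¹ z_k` form a Cauchy sequence because the `g_k⁻¹` are uniformly equicontinuous, and
`g_k x_k = z_k → z`. -/

universe u v

namespace IsometryEquiv

variable {X : Type*} [MetricSpace X]

theorem tendsto_nhds_iff {ι : Type*} {l : Filter ι} {u : ι → X ≃ᵢ X} {h : X ≃ᵢ X} :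
    Tendsto u l (𝓝 h) ↔ ∀ x, Tendsto (fun i => u i x) l (𝓝 (h x)) := by
  rw [nhds_induced, tendsto_comap_iff, tendsto_pi_nhds]
  rfl

theorem tendsto_nhds_iff_of_dense {ι : Type*} {l : Filter ι} {u : ι → X ≃ᵢ X} {h : X ≃ᵢ X}
    {s : Set X} (hs : Dense s) :
    Tendsto u l (𝓝 h) ↔ ∀ x ∈ s, Tendsto (fun i => u i x) l (𝓝 (h x)) := by
  refine tendsto_nhds_iff.trans ⟨fun H x _ => H x, fun H x => ?_⟩
  have hequi : Equicontinuous fun i => ⇑(u i) :=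
    (LipschitzWith.uniformEquicontinuous _ 1 fun i => (u i).isometry.lipschitz).equicontinuous
  exact (hequi.isClosed_setOfPred_tendsto h.continuous).closure_subset_iff.mpr H (hs x)

/-- Restriction to a countable dense set embeds `Iso(X)` into a countable product of metric
spaces. -/
instance firstCountableTopology [TopologicalSpace.SeparableSpace X] :
    FirstCountableTopology (X ≃ᵢ X) := by
  obtain ⟨s, hs_count, hs_dense⟩ := TopologicalSpace.exists_countable_dense X
  have : Countable s := hs_count.to_subtype
  let restrict : X ≃ᵢ X → (s → X) := fun g x => g x
  have hrestrict : ∀ {l : Filter (X ≃ᵢ X)} {u : X ≃ᵢ X → X ≃ᵢ X} {h : X ≃ᵢ X},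
      Tendsto u l (𝓝 h) ↔ Tendsto (restrict ∘ u) l (𝓝 (restrict h)) := by
    intro l u h
    rw [tendsto_nhds_iff_of_dense hs_dense, tendsto_pi_nhds, Subtype.forall]
    rfl
  refine IsInducing.firstCountableTopology (f := restrict) (isInducing_iff_nhds.mpr fun h => ?_)
  refine le_antisymm (tendsto_iff_comap.mp (hrestrict.mp tendsto_id)) ?_
  exact hrestrict.mpr tendsto_comap

theorem continuous_symm : Continuous (IsometryEquiv.symm : X ≃ᵢ X → X ≃ᵢ X) := by
  refine continuous_iff_continuousAt.mpr fun h => tendsto_nhds_iff.mpr fun y => ?_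
  have hdist : ∀ g : X ≃ᵢ X, dist (g.symm y) (h.symm y) = dist y (g (h.symm y)) := fun g => by
    rw [← g.dist_eq, g.apply_symm_apply]
  have hy : Tendsto (fun g : X ≃ᵢ X => g (h.symm y)) (𝓝 h) (𝓝 y) := by
    simpa using tendsto_nhds_iff.mp (tendsto_id (x := 𝓝 h)) (h.symm y)
  rw [tendsto_iff_dist_tendsto_zero]
  simpa [hdist] using (tendsto_const_nhds (x := y)).dist hy

end IsometryEquiv

theorem DivergentSeq.divergentNet {G : Type*} [TopologicalSpace G] [FirstCountableTopology G]
    {g : ℕ → G} (hg : DivergentSeq g) : DivergentNet g := fun h hh => by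
  obtain ⟨φ, hφ, hlim⟩ := hh.tendsto_subseq
  exact hg φ hφ h hlim

theorem DivergentNet.symm {X : Type*} [MetricSpace X] {ι : Type*} [Preorder ι]
    {g : ι → X ≃ᵢ X} (hg : DivergentNet g) : DivergentNet fun i => (g i).symm := fun h hh =>
  hg h.symm (hh.continuousAt_comp IsometryEquiv.continuous_symm.continuousAt)

theorem Filter.map_comp_uliftDown_atTop {α β : Type*} [Preorder α] (f : α → β) :
    map (fun i : ULift.{v} α => f i.down) atTop = map f atTop := by
  rw [← (ULift.orderIso.{v} (α := α)).map_atTop, map_map]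
  rfl

theorem IsoCauchyIndivisible.cauchySeq {X : Type u} [MetricSpace X]
    (hCI : IsoCauchyIndivisible.{u, v} X) {g : ℕ → X ≃ᵢ X} (hg : DivergentNet g) {x : X}
    (hx : CauchySeq fun n => g n x) (y : X) : CauchySeq fun n => g n y := by
  -- the index type of the net has to live in the universe `v` fixed by `hCI`
  have hg' : DivergentNet fun i : ULift.{v} ℕ => g i.down := fun h hh =>
    hg h (by rwa [MapClusterPt, map_comp_uliftDown_atTop g] at hh)
  have hx' : Cauchy (map (fun i : ULift.{v} ℕ => g i.down x) atTop) := by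
    rwa [map_comp_uliftDown_atTop fun n => g n x]
  simpa only [CauchySeq, map_comp_uliftDown_atTop fun n => g n y] using
    hCI (ULift ℕ) _ hg' ⟨x, hx'⟩ y

theorem UniformEquicontinuous.cauchySeq_apply {α β : Type*} [PseudoMetricSpace α]
    [PseudoMetricSpace β] {F : ℕ → α → β} (hF : UniformEquicontinuous F)
    (hpt : ∀ a, CauchySeq fun n => F n a) {x : ℕ → α} (hx : CauchySeq x) :
    CauchySeq fun n => F n (x n) := by
  refine Metric.cauchySeq_iff.mpr fun ε hε => ?_
  obtain ⟨δ, hδ, hFδ⟩ := Metric.uniformEquicontinuous_iff.mp hF (ε / 3) (by positivity)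
  obtain ⟨N₀, hN₀⟩ := Metric.cauchySeq_iff.mp hx δ hδ
  obtain ⟨N₁, hN₁⟩ := Metric.cauchySeq_iff.mp (hpt (x N₀)) (ε / 3) (by positivity)
  refine ⟨max N₀ N₁, fun m hm n hn => ?_⟩
  rw [ge_iff_le, max_le_iff] at hm hn
  calc dist (F m (x m)) (F n (x n))
      ≤ dist (F m (x m)) (F m (x N₀)) + dist (F m (x N₀)) (F n (x N₀))
        + dist (F n (x N₀)) (F n (x n)) := dist_triangle4 _ _ _ _
    _ < ε / 3 + ε / 3 + ε / 3 := by
      gcongr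
      · exact hFδ _ _ (hN₀ m hm.1 N₀ le_rfl) m
      · exact hN₁ m hm.2 n hn.2
      · exact hFδ _ _ (hN₀ N₀ le_rfl n hn.1) n
    _ = ε := by ring

theorem UniformSpace.Completion.exists_cauchySeq_tendsto_coe {α : Type*} [PseudoMetricSpace α]
    (z : Completion α) :
    ∃ u : ℕ → α, CauchySeq u ∧ Tendsto (fun n => (u n : Completion α)) atTop (𝓝 z) := by
  obtain ⟨v, hv, hlim⟩ := mem_closure_iff_seq_limit.mp (Completion.denseRange_coe z)
  choose u hu using hv
  obtain rfl : (fun n => (u n : Completion α)) = v := funext hu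
  exact ⟨u, (Completion.isUniformInducing_coe α).cauchy_map_iff.mp hlim.cauchySeq, hlim⟩

/-- Assertion of Remark 5.14: if `X_p ≠ ∅` then `X*_p = X̂`. -/
theorem xpStar_eq_univ_of_Xp_nonempty (X : Type*) [MetricSpace X]
    [TopologicalSpace.SeparableSpace X] (hCI : IsoCauchyIndivisible X)
    (hne : (Xp X).Nonempty) :
    XpStar X = Set.univ := by
  obtain ⟨-, g, x, hg, hgx, hgx_symm, -⟩ := hne
  have hsymm : ∀ y, CauchySeq fun n => (g n).symm y :=
    hCI.cauchySeq hg.divergentNet.symm hgx_symm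
  refine eq_univ_of_forall fun z => ?_
  obtain ⟨u, hu, hlim⟩ := Completion.exists_cauchySeq_tendsto_coe z
  have hequi := LipschitzWith.uniformEquicontinuous _ 1 fun n => (g n).symm.isometry.lipschitz
  exact ⟨g, x, fun n => (g n).symm (u n), hg, hgx, hgx_symm, hequi.cauchySeq_apply hsymm hu,
    by simpa using hlim⟩

end
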